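/- Let G be a connected P₄-free graph and let {v,w} be an edge of G that is a dominating set of G. Set A = N(v) \ N[w], B = N(w) \ N[v], and C = N(v) ∩ N(w). Then every vertex x ∈ C satisfies A ⊆ N(x) or B ⊆ N(x). -/

import Mathlib

/-!
If a common neighbour `x` of `v` and `w` missed some `a ∈ A` and some `b ∈ B`, then
`x - v - a - b` would be an induced `P₄` when `a ~ b`, and `a - v - w - b` one otherwise.
-/

open SimpleGraph

/-- The join of two graphs on disjoint vertex sets: disjoint union plus all cross edges. -/
def gJoin {α β : Type*} (G : SimpleGraph α) (H : SimpleGraph β) : SimpleGraph (α ⊕ β) where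
  Adj x y := match x, y with
    | Sum.inl a, Sum.inl b => G.Adj a b
    | Sum.inr a, Sum.inr b => H.Adj a b
    | Sum.inl _, Sum.inr _ => True
    | Sum.inr _, Sum.inl _ => True
  symm := ⟨by rintro (a|a) (b|b) h <;> first | exact h.symm | trivial⟩
  loopless := ⟨by rintro (a|a) h; exacts [G.loopless.irrefl _ h, H.loopless.irrefl _ h]⟩

/-- A graph is `P₄`-free if it has no induced subgraph isomorphic to the path on 4 vertices. -/
def P4Free {V : Type*} (G : SimpleGraph V) : Prop :=
  IsEmpty (SimpleGraph.pathGraph 4 ↪g G)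

/-- `T` is a connected dominating set of `G`. -/
def IsConnDomSet {V : Type*} (G : SimpleGraph V) (T : Set V) : Prop :=
  T.Nonempty ∧ (G.induce T).Connected ∧ ∀ u ∉ T, ∃ t ∈ T, G.Adj u t

/-- `T` is a minimum connected dominating set of `G`. -/
def IsMinConnDomSet {V : Type*} (G : SimpleGraph V) (T : Set V) : Prop :=
  IsConnDomSet G T ∧ ∀ T' : Set V, IsConnDomSet G T' → T.ncard ≤ T'.ncard

/-- The graph `K₁ ⊔ K₂`: three vertices, exactly one edge (between 0 and 1). -/
def graphK1K2 : SimpleGraph (Fin 3) := SimpleGraph.fromRel (fun a b => a = 0 ∧ b = 1)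

/-- The star `K_{1,3}`: vertex 0 adjacent to 1, 2, 3. -/
def graphK13 : SimpleGraph (Fin 4) := SimpleGraph.fromRel (fun a _ => a = 0)

/-- The graph `B = K₁ * (K₁ ⊔ K₂)`: vertex 0 adjacent to all, plus the edge 2-3. -/
def graphB : SimpleGraph (Fin 4) := SimpleGraph.fromRel (fun a b => a = 0 ∨ (a = 2 ∧ b = 3))

def SimpleGraph.pathGraphFourEmbedding {V : Type*} (G : SimpleGraph V) {a b c d : V}
    (hab : G.Adj a b) (hbc : G.Adj b c) (hcd : G.Adj c d)
    (hac : ¬G.Adj a c) (had : ¬G.Adj a d) (hbd : ¬G.Adj b d) : pathGraph 4 ↪g G where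
  toFun := ![a, b, c, d]
  inj' := by
    have := hab.ne; have := hbc.ne; have := hcd.ne
    have : a ≠ c := by rintro rfl; exact had hcd
    have : a ≠ d := by rintro rfl; exact hac hcd.symm
    have : b ≠ d := by rintro rfl; exact had hab
    intro i j hij
    fin_cases i <;> fin_cases j <;> simp_all [eq_comm]
  map_rel_iff' := by
    intro i j
    change G.Adj (![a, b, c, d] i) (![a, b, c, d] j) ↔ _
    fin_cases i <;> fin_cases j <;>
      simp [pathGraph_adj, hab, hbc, hcd, hab.symm, hbc.symm, hcd.symm, hac, had, hbd,
        mt G.adj_symm hac, mt G.adj_symm had, mt G.adj_symm hbd]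

theorem P4Free.not_induced_path {V : Type*} {G : SimpleGraph V} (h : P4Free G) {a b c d : V}
    (hab : G.Adj a b) (hbc : G.Adj b c) (hcd : G.Adj c d)
    (hac : ¬G.Adj a c) (had : ¬G.Adj a d) (hbd : ¬G.Adj b d) : False :=
  h.false (G.pathGraphFourEmbedding hab hbc hcd hac had hbd)

theorem stmt3_general {V : Type} (G : SimpleGraph V)
    (h4 : P4Free G) (v w : V) (hvw : G.Adj v w) :
    ∀ x ∈ G.neighborSet v ∩ G.neighborSet w,
      G.neighborSet v \ (G.neighborSet w ∪ {w}) ⊆ G.neighborSet x ∨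
      G.neighborSet w \ (G.neighborSet v ∪ {v}) ⊆ G.neighborSet x := by
  rintro x ⟨hvx, -⟩
  refine or_iff_not_imp_left.2 fun hA b ⟨hwb, hb⟩ => by_contra fun hxb => ?_
  obtain ⟨a, ⟨hva, ha⟩, hxa⟩ := Set.not_subset.1 hA
  simp only [Set.mem_union, mem_neighborSet, not_or] at ha hb hxa hxb hva hwb
  obtain ⟨hwa, -⟩ := ha
  obtain ⟨hvb, -⟩ := hb
  by_cases hab : G.Adj a b
  · exact h4.not_induced_path hvx.symm hva hab hxa hxb hvb
  · exact h4.not_induced_path hva.symm hvw hwb (mt G.adj_symm hwa) hab hvb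

/-- In a connected P₄-free graph with dominating edge {v,w}, every common neighbor x of
v and w satisfies A ⊆ N(x) or B ⊆ N(x). -/
theorem stmt3 {V : Type} [Fintype V] (G : SimpleGraph V) (hc : G.Connected)
    (h4 : P4Free G) (v w : V) (hvw : G.Adj v w)
    (hdom : ∀ u, u ≠ v → u ≠ w → G.Adj u v ∨ G.Adj u w) :
    ∀ x ∈ G.neighborSet v ∩ G.neighborSet w,
      G.neighborSet v \ (G.neighborSet w ∪ {w}) ⊆ G.neighborSet x ∨
      G.neighborSet w \ (G.neighborSet v ∪ {v}) ⊆ G.neighborSet x :=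
  stmt3_general G h4 v w hvw
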